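/- arXiv:1008.0537 — 6 statements merged into one kernel-verified Lean document; each statement's English description precedes it below -/
import Mathlib

section
/- Let P, Q, R be three non-collinear points on a circle with center O and radius r. If the lines through P, Q, R perpendicular respectively to lines SP, SQ, SR (for some point S distinct from P, Q, R) are concurrent, then S lies on the circle through P, Q, R. -/
/-! By Thales' theorem, `Perp (T - X) (S - X)` says that `X` lies on the circle with diameter `TS`.
So the three perpendiculars are concurrent at `T` exactly when `P, Q, R` lie on that circle. Three
non-collinear points lie on only one circle, so it is the circle of centre `O` and radius `r`,
and it passes through `S`. -/

/-- Perpendicularity of plane vectors via the real inner product on `ℂ`. -/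
def Perp (u v : ℂ) : Prop := (u * (starRingEnd ℂ) v).re = 0

open EuclideanGeometry Module

theorem perp_iff_inner_eq_zero (u v : ℂ) : Perp u v ↔ inner ℝ u v = 0 := by
  rw [real_inner_comm, Complex.inner]
  rfl

theorem mem_sphere_ofDiameter_of_perp {S T X : ℂ} (h : Perp (T - X) (S - X)) :
    X ∈ Sphere.ofDiameter T S := by
  rw [← Sphere.angle_eq_pi_div_two_iff_mem_sphere_ofDiameter, EuclideanGeometry.angle,
    ← InnerProductGeometry.inner_eq_zero_iff_angle_eq_pi_div_two]
  exact (perp_iff_inner_eq_zero _ _).1 h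

namespace EuclideanGeometry.Sphere

variable {V P : Type*} [NormedAddCommGroup V] [InnerProductSpace ℝ V] [MetricSpace P]
  [NormedAddTorsor V P]

theorem eq_of_not_collinear_of_finrank_eq_two [FiniteDimensional ℝ V] (hd : finrank ℝ V = 2)
    {s₁ s₂ : Sphere P} {p₁ p₂ p₃ : P} (hcol : ¬Collinear ℝ ({p₁, p₂, p₃} : Set P))
    (hp₁s₁ : p₁ ∈ s₁) (hp₂s₁ : p₂ ∈ s₁) (hp₃s₁ : p₃ ∈ s₁)
    (hp₁s₂ : p₁ ∈ s₂) (hp₂s₂ : p₂ ∈ s₂) (hp₃s₂ : p₃ ∈ s₂) : s₁ = s₂ := by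
  by_contra hs
  rcases eq_of_mem_sphere_of_mem_sphere_of_finrank_eq_two hd hs (ne₁₂_of_not_collinear hcol)
    hp₁s₁ hp₂s₁ hp₃s₁ hp₁s₂ hp₂s₂ hp₃s₂ with h | h
  · exact ne₁₃_of_not_collinear hcol h.symm
  · exact ne₂₃_of_not_collinear hcol h.symm

end EuclideanGeometry.Sphere

theorem stmt_1_general (P Q R S O : ℂ) (r : ℝ)
    (hncol : ¬ Collinear ℝ ({P, Q, R} : Set ℂ))
    (hP : dist O P = r) (hQ : dist O Q = r) (hR : dist O R = r)
    (hconc : ∃ T : ℂ, Perp (T - P) (S - P) ∧ Perp (T - Q) (S - Q) ∧ Perp (T - R) (S - R)) :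
    dist O S = r := by
  obtain ⟨T, hTP, hTQ, hTR⟩ := hconc
  have mem_circle {X : ℂ} (hX : dist O X = r) : X ∈ (⟨O, r⟩ : Sphere ℂ) := by
    rwa [mem_sphere, dist_comm]
  have hcircle : (⟨O, r⟩ : Sphere ℂ) = Sphere.ofDiameter T S :=
    Sphere.eq_of_not_collinear_of_finrank_eq_two Complex.finrank_real_complex hncol
      (mem_circle hP) (mem_circle hQ) (mem_circle hR) (mem_sphere_ofDiameter_of_perp hTP)
      (mem_sphere_ofDiameter_of_perp hTQ) (mem_sphere_ofDiameter_of_perp hTR)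
  have hS : S ∈ (⟨O, r⟩ : Sphere ℂ) := hcircle ▸ (Sphere.isDiameter_ofDiameter T S).right_mem
  rwa [mem_sphere, dist_comm] at hS

/-- If `P, Q, R` are non-collinear points on a circle with centre `O` and radius `r`,
`S` is a point distinct from `P, Q, R`, and the lines through `P, Q, R` perpendicular
respectively to `SP, SQ, SR` are concurrent (at some point `T`), then `S` lies on the
circle through `P, Q, R`. -/
theorem stmt_1 (P Q R S O : ℂ) (r : ℝ)
    (hncol : ¬ Collinear ℝ ({P, Q, R} : Set ℂ))
    (hP : dist O P = r) (hQ : dist O Q = r) (hR : dist O R = r)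
    (hSP : S ≠ P) (hSQ : S ≠ Q) (hSR : S ≠ R)
    (hconc : ∃ T : ℂ, Perp (T - P) (S - P) ∧ Perp (T - Q) (S - Q) ∧ Perp (T - R) (S - R)) :
    dist O S = r :=
  stmt_1_general P Q R S O r hncol hP hQ hR hconc
end

section
/- Let two circles meet at distinct points J and K. Let A, B, C lie on the first circle (forming a nondegenerate triangle), and let a, b, c be the second intersections of lines AK, BK, CK with the second circle. Then triangle abc is the image of triangle ABC under a direct similarity (spiral similarity) centered at J. -/
/-!
For `z₁, z₂` on a circle with centre `O` and radius `r`, `conj (z - O) = r² / (z - O)` gives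
`conj (z₁ - z₂) * (z₁ - O) * (z₂ - O) = -r² (z₁ - z₂)`: the ratio `conj d / d` of a chord
direction `d` is `-r² / ((z₁ - O)(z₂ - O))`. Applying this to the chords `XK` and `xK`, which
share a direction, and to the common chord `JK` of both circles, the radii and directions cancel
and leave `(X - O₁)(J - O₂) = (x - O₂)(J - O₁)`, i.e. `x = J + w (X - J)` with
`w = (O₂ - J) / (O₁ - J)`, independently of `X`.
-/

open ComplexConjugate

lemma ne_of_dist_eq_of_ne {P : Type*} [MetricSpace P] {O J K : P} {r : ℝ}
    (hJ : dist O J = r) (hK : dist O K = r) (hJK : J ≠ K) : O ≠ J := by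
  rintro rfl
  rw [dist_self] at hJ
  exact hJK (dist_eq_zero.1 (hK.trans hJ.symm))

namespace Complex

lemma sub_mul_conj_sub_of_dist_eq {O z : ℂ} {r : ℝ} (h : dist O z = r) :
    (z - O) * conj (z - O) = (r : ℂ) ^ 2 := by
  rw [mul_conj, normSq_eq_norm_sq, ← dist_eq, dist_comm, h]
  push_cast
  ring

lemma conj_chord_mul {O z₁ z₂ : ℂ} {r : ℝ} (h₁ : dist O z₁ = r) (h₂ : dist O z₂ = r) :
    conj (z₁ - z₂) * ((z₁ - O) * (z₂ - O)) = -(r : ℂ) ^ 2 * (z₁ - z₂) := by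
  have e₁ := sub_mul_conj_sub_of_dist_eq h₁
  have e₂ := sub_mul_conj_sub_of_dist_eq h₂
  simp only [map_sub] at e₁ e₂ ⊢
  linear_combination (z₂ - O) * e₁ - (z₁ - O) * e₂

lemma conj_dir_mul_of_vadd {O K z v : ℂ} {r s : ℝ} (hK : dist O K = r) (hz : dist O z = r)
    (hzK : z ≠ K) (hzv : z = s • v +ᵥ K) :
    conj v * ((z - O) * (K - O)) = -(r : ℂ) ^ 2 * v := by
  have hs : (s : ℂ) ≠ 0 := by
    rintro hs
    rw [hzv, real_smul, hs, zero_mul, vadd_eq_add, zero_add] at hzK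
    exact hzK rfl
  have chord := conj_chord_mul hz hK
  rw [show z - K = s * v by rw [hzv, vadd_eq_add, real_smul]; ring, map_mul, conj_ofReal] at chord
  exact mul_left_cancel₀ hs (by linear_combination chord)

theorem second_intersection_eq_spiral {O₁ O₂ J K X x : ℂ} {r₁ r₂ : ℝ} (hJK : J ≠ K)
    (hJ₁ : dist O₁ J = r₁) (hK₁ : dist O₁ K = r₁) (hJ₂ : dist O₂ J = r₂) (hK₂ : dist O₂ K = r₂)
    (hX : dist O₁ X = r₁) (hx : dist O₂ x = r₂) (hXK : X ≠ K) (hxK : x ≠ K)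
    (hcol : Collinear ℝ ({X, K, x} : Set ℂ)) :
    x = J + (O₂ - J) / (O₁ - J) * (X - J) := by
  rw [collinear_iff_of_mem (p₀ := K) (by simp)] at hcol
  obtain ⟨v, hv⟩ := hcol
  obtain ⟨sX, hsX⟩ := hv X (by simp)
  obtain ⟨sx, hsx⟩ := hv x (by simp)
  have chordX₁ := conj_dir_mul_of_vadd hK₁ hX hXK hsX
  have chordx₂ := conj_dir_mul_of_vadd hK₂ hx hxK hsx
  have chordJ₁ := conj_chord_mul hJ₁ hK₁
  have chordJ₂ := conj_chord_mul hJ₂ hK₂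
  have hv0 : conj v ≠ 0 := (map_ne_zero _).2 <| by
    rintro rfl
    rw [smul_zero, zero_vadd] at hsX
    exact hXK hsX
  have hconjJK : conj (J - K) ≠ 0 := (map_ne_zero _).2 (sub_ne_zero.2 hJK)
  have hO₁K : K - O₁ ≠ 0 := sub_ne_zero.2 (ne_of_dist_eq_of_ne hK₁ hJ₁ hJK.symm).symm
  have hO₂K : K - O₂ ≠ 0 := sub_ne_zero.2 (ne_of_dist_eq_of_ne hK₂ hJ₂ hJK.symm).symm
  have hO₁J : O₁ - J ≠ 0 := sub_ne_zero.2 (ne_of_dist_eq_of_ne hJ₁ hK₁ hJK)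
  -- both cross terms factor into chord identities, with common value `r₁² r₂² v (J - K)`
  have hprod : conj v * conj (J - K) * (K - O₁) * (K - O₂) *
      ((X - O₁) * (J - O₂) - (x - O₂) * (J - O₁)) = 0 := by
    linear_combination (conj (J - K) * (J - O₂) * (K - O₂)) * chordX₁
      + (-(r₁ : ℂ) ^ 2 * v) * chordJ₂ - (conj (J - K) * (J - O₁) * (K - O₁)) * chordx₂
      - (-(r₂ : ℂ) ^ 2 * v) * chordJ₁
  have hcross := sub_eq_zero.1 <| (mul_eq_zero.1 hprod).resolve_left
    (mul_ne_zero (mul_ne_zero (mul_ne_zero hv0 hconjJK) hO₁K) hO₂K)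
  rw [div_mul_eq_mul_div, ← sub_eq_iff_eq_add', eq_div_iff hO₁J]
  linear_combination hcross

end Complex

theorem stmt_5_general (O₁ O₂ J K A B C a b c : ℂ) (r₁ r₂ : ℝ)
    (hJK : J ≠ K)
    (hJ1 : dist O₁ J = r₁) (hK1 : dist O₁ K = r₁)
    (hJ2 : dist O₂ J = r₂) (hK2 : dist O₂ K = r₂)
    (hA : dist O₁ A = r₁) (hB : dist O₁ B = r₁) (hC : dist O₁ C = r₁)
    (hAK : A ≠ K) (hBK : B ≠ K) (hCK : C ≠ K)
    (ha : dist O₂ a = r₂) (hb : dist O₂ b = r₂) (hc : dist O₂ c = r₂)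
    (haK : a ≠ K) (hbK : b ≠ K) (hcK : c ≠ K)
    (hacol : Collinear ℝ ({A, K, a} : Set ℂ))
    (hbcol : Collinear ℝ ({B, K, b} : Set ℂ))
    (hccol : Collinear ℝ ({C, K, c} : Set ℂ)) :
    ∃ w : ℂ, w ≠ 0 ∧ a = J + w * (A - J) ∧ b = J + w * (B - J) ∧ c = J + w * (C - J) := by
  have hO₁J : O₁ - J ≠ 0 := sub_ne_zero.2 (ne_of_dist_eq_of_ne hJ1 hK1 hJK)
  have hO₂J : O₂ - J ≠ 0 := sub_ne_zero.2 (ne_of_dist_eq_of_ne hJ2 hK2 hJK)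
  exact ⟨(O₂ - J) / (O₁ - J), div_ne_zero hO₂J hO₁J,
    Complex.second_intersection_eq_spiral hJK hJ1 hK1 hJ2 hK2 hA ha hAK haK hacol,
    Complex.second_intersection_eq_spiral hJK hJ1 hK1 hJ2 hK2 hB hb hBK hbK hbcol,
    Complex.second_intersection_eq_spiral hJK hJ1 hK1 hJ2 hK2 hC hc hCK hcK hccol⟩

/-- Two circles meet at distinct points `J` and `K`.  `A, B, C` lie on the first circle
and `a, b, c` are the second intersections of lines `AK, BK, CK` with the second circle.
Then triangle `abc` is the image of triangle `ABC` under a direct (spiral) similarity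
centred at `J`. -/
theorem stmt_5 (O₁ O₂ J K A B C a b c : ℂ) (r₁ r₂ : ℝ)
    (hO : O₁ ≠ O₂) (hJK : J ≠ K)
    (hJ1 : dist O₁ J = r₁) (hK1 : dist O₁ K = r₁)
    (hJ2 : dist O₂ J = r₂) (hK2 : dist O₂ K = r₂)
    (hA : dist O₁ A = r₁) (hB : dist O₁ B = r₁) (hC : dist O₁ C = r₁)
    (hncol : ¬ Collinear ℝ ({A, B, C} : Set ℂ))
    (hAK : A ≠ K) (hBK : B ≠ K) (hCK : C ≠ K)
    (hAJ : A ≠ J) (hBJ : B ≠ J) (hCJ : C ≠ J)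
    (ha : dist O₂ a = r₂) (hb : dist O₂ b = r₂) (hc : dist O₂ c = r₂)
    (haK : a ≠ K) (hbK : b ≠ K) (hcK : c ≠ K)
    (hacol : Collinear ℝ ({A, K, a} : Set ℂ))
    (hbcol : Collinear ℝ ({B, K, b} : Set ℂ))
    (hccol : Collinear ℝ ({C, K, c} : Set ℂ)) :
    ∃ w : ℂ, w ≠ 0 ∧ a = J + w * (A - J) ∧ b = J + w * (B - J) ∧ c = J + w * (C - J) :=
  stmt_5_general O₁ O₂ J K A B C a b c r₁ r₂ hJK hJ1 hK1 hJ2 hK2 hA hB hC hAK hBK hCK ha hb hc haK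
    hbK hcK hacol hbcol hccol
end

section
/- With the Wood–Desargues setup (two circles meeting at J and K, triangle ABC inscribed in the first circle, a, b, c the second intersections of AK, BK, CK with the second circle), suppose lines CA and ca meet at a point 2, and lines AB and ab meet at a point 3. Then the four points A, a, 2, 3 are concyclic. -/
/-!
The spiral similarity `z ↦ J + w (z - J)` with `w = (O₂ - J) / (O₁ - J)` maps the first circle
onto the second, and it sends each point `X` of the first circle to the second intersection of
`XK` with the second circle: in complex coordinates this reduces to the fact that `K` is the
reflection of `J` in the line of centres. Since `O₁ ≠ O₂`, the ratio `w` is not real.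

So `a, b, c` are the images of `A, B, C`, and the point `2` is the intersection of the line `CA`
with its image `ca`. The centre `J` of a spiral similarity taking a line to a second line lies
on the circle through the intersection point of the two lines and any point with its image;
hence `2` lies on the circle `JAa`, and likewise `3`. The centre of that circle is explicit, so
everything reduces to polynomial identities in the coordinates and their conjugates.
-/

open ComplexConjugate

namespace Wood

lemma dist_eq_dist_iff {O z z' : ℂ} :
    dist O z = dist O z' ↔ (z - O) * (conj z - conj O) = (z' - O) * (conj z' - conj O) := by
  simp only [← map_sub, Complex.mul_conj', dist_comm O, Complex.dist_eq]
  norm_cast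
  exact (sq_eq_sq₀ (norm_nonneg _) (norm_nonneg _)).symm

lemma sub_mul_conj_sub_eq_of_collinear {p q z : ℂ} (h : Collinear ℝ ({p, q, z} : Set ℂ)) :
    (z - p) * (conj q - conj p) = (conj z - conj p) * (q - p) := by
  obtain ⟨v, hv⟩ := (collinear_iff_of_mem (p₀ := p) (by simp)).mp h
  obtain ⟨s, rfl⟩ := hv q (by simp)
  obtain ⟨t, rfl⟩ := hv z (by simp)
  simp only [vadd_eq_add, Complex.real_smul, add_sub_cancel_right, map_add, map_mul,
    Complex.conj_ofReal]
  ring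

lemma conj_sub_conj_ne_zero {x y : ℂ} (h : x ≠ y) : conj x - conj y ≠ 0 :=
  sub_ne_zero.mpr ((RingHom.injective _).ne h)

section TwoCircles

variable {O₁ O₂ J K : ℂ}

lemma center_sub_ne_zero (hJK : J ≠ K) (hK : dist O₁ K = dist O₁ J) : O₁ - J ≠ 0 := by
  rintro h
  rw [sub_eq_zero.mp h, dist_self, dist_eq_zero] at hK
  exact hJK hK

/-- `K` is the reflection of `J` in the line `O₁O₂`. -/
lemma reflection_identity (hJK : J ≠ K)
    (hK₁ : dist O₁ K = dist O₁ J) (hK₂ : dist O₂ K = dist O₂ J) :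
    (O₂ - O₁) * (conj K - conj J) =
      (conj O₁ - conj J) * (O₂ - J) - (O₁ - J) * (conj O₂ - conj J) := by
  rw [dist_eq_dist_iff] at hK₁ hK₂
  apply mul_left_cancel₀ (conj_sub_conj_ne_zero hJK.symm)
  linear_combination (conj O₁ - conj O₂) * hK₁ + (conj K - conj O₁) * (hK₁ - hK₂)

lemma conj_div_ne_self (hO : O₁ ≠ O₂) (hJK : J ≠ K)
    (hK₁ : dist O₁ K = dist O₁ J) (hK₂ : dist O₂ K = dist O₂ J) :
    conj ((O₂ - J) / (O₁ - J)) ≠ (O₂ - J) / (O₁ - J) := by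
  have hO₁J := center_sub_ne_zero hJK hK₁
  intro h
  rw [map_div₀, map_sub, map_sub,
    div_eq_div_iff (by rw [← map_sub]; exact (map_ne_zero _).mpr hO₁J) hO₁J] at h
  have h0 : (O₂ - O₁) * (conj K - conj J) = 0 := by
    linear_combination reflection_identity hJK hK₁ hK₂ - h
  exact hO (sub_eq_zero.mp ((mul_eq_zero.mp h0).resolve_right
    (conj_sub_conj_ne_zero hJK.symm))).symm

lemma sub_eq_div_mul_sub_of_collinear {X x : ℂ} (hJK : J ≠ K)
    (hK₁ : dist O₁ K = dist O₁ J) (hK₂ : dist O₂ K = dist O₂ J)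
    (hX : dist O₁ X = dist O₁ J) (hx : dist O₂ x = dist O₂ J)
    (hXK : X ≠ K) (hxK : x ≠ K) (hcol : Collinear ℝ ({X, K, x} : Set ℂ)) :
    x - J = (O₂ - J) / (O₁ - J) * (X - J) := by
  have hO₁J := center_sub_ne_zero hJK hK₁
  have hrefl := reflection_identity hJK hK₁ hK₂
  rw [Set.insert_comm] at hcol
  have hline := sub_mul_conj_sub_eq_of_collinear hcol
  rw [dist_eq_dist_iff] at hK₁ hK₂ hX hx
  have E₁ : (X - K) * (conj X - conj K) + (X - K) * (conj K - conj O₁)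
      + (conj X - conj K) * (K - O₁) = 0 := by
    linear_combination hX - hK₁
  have E₂ : (x - K) * (conj X - conj K) + (X - K) * (conj K - conj O₂)
      + (conj X - conj K) * (K - O₂) = 0 := by
    apply mul_left_cancel₀ (sub_ne_zero.mpr hxK)
    linear_combination (X - K) * (hx - hK₂) + (x - O₂) * hline
  rw [div_mul_eq_mul_div, eq_div_iff hO₁J]
  apply mul_left_cancel₀ (conj_sub_conj_ne_zero hXK)
  linear_combination (O₁ - J) * E₂ - (O₂ - J) * E₁ + (X - K) * hrefl

end TwoCircles

/-- The circumcentre of `J`, `A` and `J + w * (A - J)`, for non-real `w`. -/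
noncomputable def spiralCircumcenter (J w A : ℂ) : ℂ :=
  J + w * (1 - conj w) / (w - conj w) * (A - J)

section SpiralCircle

variable {J w A : ℂ}

lemma dist_spiralCircumcenter {z : ℂ} (hw : conj w ≠ w)
    (hz : (w - conj w) * ((z - J) * (conj z - conj J)) =
      w * (1 - conj w) * (A - J) * (conj z - conj J)
        - conj w * (1 - w) * (conj A - conj J) * (z - J)) :
    dist (spiralCircumcenter J w A) z = dist (spiralCircumcenter J w A) J := by
  have hμ : (w - conj w) * (w * (1 - conj w) / (w - conj w)) = w * (1 - conj w) :=
    mul_div_cancel₀ _ (sub_ne_zero.mpr hw.symm)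
  have hμ' : (conj w - w) * (conj w * (1 - w) / (conj w - w)) = conj w * (1 - w) :=
    mul_div_cancel₀ _ (sub_ne_zero.mpr hw)
  rw [dist_eq_dist_iff, spiralCircumcenter]
  simp only [map_add, map_mul, map_div₀, map_sub, map_one, Complex.conj_conj]
  apply mul_left_cancel₀ (sub_ne_zero.mpr hw.symm)
  linear_combination
    hz - (A - J) * (conj z - conj J) * hμ + (conj A - conj J) * (z - J) * hμ'

lemma dist_spiralCircumcenter_image (hw : conj w ≠ w) :
    dist (spiralCircumcenter J w A) (J + w * (A - J)) = dist (spiralCircumcenter J w A) J :=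
  dist_spiralCircumcenter hw (by simp only [map_add, map_mul, map_sub]; ring)

lemma dist_spiralCircumcenter_of_collinear {C P : ℂ} (hw : conj w ≠ w) (hCA : C ≠ A)
    (h : Collinear ℝ ({C, A, P} : Set ℂ))
    (h' : Collinear ℝ ({J + w * (C - J), J + w * (A - J), P} : Set ℂ)) :
    dist (spiralCircumcenter J w A) P = dist (spiralCircumcenter J w A) J := by
  have h₁ := sub_mul_conj_sub_eq_of_collinear h
  have h₂ := sub_mul_conj_sub_eq_of_collinear h'
  simp only [map_add, map_mul, map_sub] at h₂
  apply dist_spiralCircumcenter hw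
  have hw' : w - conj w ≠ 0 := sub_ne_zero.mpr hw.symm
  apply mul_left_cancel₀ (mul_ne_zero (mul_ne_zero hw' (conj_sub_conj_ne_zero hCA.symm))
    (mul_ne_zero hw' (sub_ne_zero.mpr hCA.symm)))
  -- `w * h₁ - h₂` and `conj w * h₁ - h₂` solve the two line equations for `P` and `conj P`.
  linear_combination
    ((w - conj w) * ((w - conj w) * (A - C)) * (conj P - conj J)
        + (conj A - conj J) * conj w * (1 - w) * ((w - conj w) * (A - C))) * (w * h₁ - h₂)
    + ((w - conj w) * w * (1 - conj w)
          * ((C - J) * (conj A - conj C) - (conj C - conj J) * (A - C))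
        - (A - J) * w * (1 - conj w) * ((w - conj w) * (conj A - conj C))) * (conj w * h₁ - h₂)

end SpiralCircle

end Wood

open Wood in
theorem stmt_6_general (O₁ O₂ J K A B C a b c P2 P3 : ℂ) (r₁ r₂ : ℝ)
    (hO : O₁ ≠ O₂) (hJK : J ≠ K)
    (hJ1 : dist O₁ J = r₁) (hK1 : dist O₁ K = r₁)
    (hJ2 : dist O₂ J = r₂) (hK2 : dist O₂ K = r₂)
    (hA : dist O₁ A = r₁) (hB : dist O₁ B = r₁) (hC : dist O₁ C = r₁)
    (hncol : ¬ Collinear ℝ ({A, B, C} : Set ℂ))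
    (hAK : A ≠ K) (hBK : B ≠ K) (hCK : C ≠ K)
    (ha : dist O₂ a = r₂) (hb : dist O₂ b = r₂) (hc : dist O₂ c = r₂)
    (haK : a ≠ K) (hbK : b ≠ K) (hcK : c ≠ K)
    (hacol : Collinear ℝ ({A, K, a} : Set ℂ))
    (hbcol : Collinear ℝ ({B, K, b} : Set ℂ))
    (hccol : Collinear ℝ ({C, K, c} : Set ℂ))
    (h2 : Collinear ℝ ({C, A, P2} : Set ℂ) ∧ Collinear ℝ ({c, a, P2} : Set ℂ))
    (h3 : Collinear ℝ ({A, B, P3} : Set ℂ) ∧ Collinear ℝ ({a, b, P3} : Set ℂ)) :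
    ∃ (O : ℂ) (r : ℝ), dist O A = r ∧ dist O a = r ∧ dist O P2 = r ∧ dist O P3 = r := by
  have hAB : A ≠ B := by
    rintro rfl
    exact hncol (by simpa using collinear_pair ℝ A C)
  have hAC : A ≠ C := by
    rintro rfl
    exact hncol (by simpa [Set.pair_comm] using collinear_pair ℝ A B)
  have hK₁ := hK1.trans hJ1.symm
  have hK₂ := hK2.trans hJ2.symm
  have hw := conj_div_ne_self hO hJK hK₁ hK₂
  have ha' := sub_eq_div_mul_sub_of_collinear hJK hK₁ hK₂ (hA.trans hJ1.symm)
    (ha.trans hJ2.symm) hAK haK hacol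
  have hb' := sub_eq_div_mul_sub_of_collinear hJK hK₁ hK₂ (hB.trans hJ1.symm)
    (hb.trans hJ2.symm) hBK hbK hbcol
  have hc' := sub_eq_div_mul_sub_of_collinear hJK hK₁ hK₂ (hC.trans hJ1.symm)
    (hc.trans hJ2.symm) hCK hcK hccol
  generalize (O₂ - J) / (O₁ - J) = w at hw ha' hb' hc'
  rw [sub_eq_iff_eq_add'] at ha' hb' hc'
  subst ha' hb' hc'
  obtain ⟨h2CA, h2ca⟩ := h2
  obtain ⟨h3AB, h3ab⟩ := h3
  rw [Set.insert_comm] at h3AB h3ab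
  exact ⟨spiralCircumcenter J w A, dist (spiralCircumcenter J w A) J,
    dist_spiralCircumcenter hw (by ring), dist_spiralCircumcenter_image hw,
    dist_spiralCircumcenter_of_collinear hw hAC.symm h2CA h2ca,
    dist_spiralCircumcenter_of_collinear hw hAB.symm h3AB h3ab⟩

/-- Wood's theorem: in the Wood–Desargues configuration (two circles meeting at `J, K`,
triangle `ABC` on the first circle, `a, b, c` the second intersections of `AK, BK, CK`
with the second circle), if `2 = CA ∩ ca` and `3 = AB ∩ ab`, then `A, a, 2, 3` are
concyclic. -/
theorem stmt_6 (O₁ O₂ J K A B C a b c P2 P3 : ℂ) (r₁ r₂ : ℝ)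
    (hO : O₁ ≠ O₂) (hJK : J ≠ K)
    (hJ1 : dist O₁ J = r₁) (hK1 : dist O₁ K = r₁)
    (hJ2 : dist O₂ J = r₂) (hK2 : dist O₂ K = r₂)
    (hA : dist O₁ A = r₁) (hB : dist O₁ B = r₁) (hC : dist O₁ C = r₁)
    (hncol : ¬ Collinear ℝ ({A, B, C} : Set ℂ))
    (hAK : A ≠ K) (hBK : B ≠ K) (hCK : C ≠ K)
    (hAJ : A ≠ J) (hBJ : B ≠ J) (hCJ : C ≠ J)
    (ha : dist O₂ a = r₂) (hb : dist O₂ b = r₂) (hc : dist O₂ c = r₂)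
    (haK : a ≠ K) (hbK : b ≠ K) (hcK : c ≠ K)
    (hacol : Collinear ℝ ({A, K, a} : Set ℂ))
    (hbcol : Collinear ℝ ({B, K, b} : Set ℂ))
    (hccol : Collinear ℝ ({C, K, c} : Set ℂ))
    (h2 : Collinear ℝ ({C, A, P2} : Set ℂ) ∧ Collinear ℝ ({c, a, P2} : Set ℂ))
    (h3 : Collinear ℝ ({A, B, P3} : Set ℂ) ∧ Collinear ℝ ({a, b, P3} : Set ℂ)) :
    ∃ (O : ℂ) (r : ℝ), dist O A = r ∧ dist O a = r ∧ dist O P2 = r ∧ dist O P3 = r :=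
  stmt_6_general O₁ O₂ J K A B C a b c P2 P3 r₁ r₂ hO hJK hJ1 hK1 hJ2 hK2 hA hB hC hncol hAK hBK hCK
    ha hb hc haK hbK hcK hacol hbcol hccol h2 h3
end

section
/- Let triangles ABC and A'B'C' be directly similar, related by a nontrivial spiral similarity centered at J (not a pure translation or identity). Then the lines AA', BB', CC' are concurrent if and only if the point of concurrency lies on the circumcircle of ABC (equivalently, the second intersection point of circumcircles of ABC and A'B'C' other than the similarity-related fixed data is the perspector). -/
/-!
If `Z` lies on the line `PP'` with `P' = J + w (P - J)`, then `Z - P` is a real multiple of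
`(w - 1) (P - J)`, so the chord `JZ` is seen from `P` under the fixed oriented angle `arg (w - 1)`
(mod `π`). Hence `A`, `B`, `C` lie on one circle through `J` and `Z`, with an explicit center
depending only on `w`, `J`, `Z`. Two circles sharing three distinct points coincide, so this
circle is the circumcircle of `ABC`, and `Z` lies on it. The triangle `A'B'C'` is mapped back to
`ABC` by the spiral similarity of ratio `w⁻¹` about `J`, so the same argument puts `Z` on its
circumcircle.
-/

open Complex ComplexConjugate EuclideanGeometry

theorem EuclideanGeometry.Sphere.eq_of_mem_of_mem_of_mem {V P : Type*} [NormedAddCommGroup V]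
    [InnerProductSpace ℝ V] [MetricSpace P] [NormedAddTorsor V P] [FiniteDimensional ℝ V]
    (hd : Module.finrank ℝ V = 2) {s₁ s₂ : Sphere P} {p₁ p₂ p₃ : P}
    (h₁₂ : p₁ ≠ p₂) (h₁₃ : p₁ ≠ p₃) (h₂₃ : p₂ ≠ p₃)
    (hp₁s₁ : p₁ ∈ s₁) (hp₂s₁ : p₂ ∈ s₁) (hp₃s₁ : p₃ ∈ s₁)
    (hp₁s₂ : p₁ ∈ s₂) (hp₂s₂ : p₂ ∈ s₂) (hp₃s₂ : p₃ ∈ s₂) : s₁ = s₂ := by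
  by_contra hs
  rcases eq_of_mem_sphere_of_mem_sphere_of_finrank_eq_two hd hs h₁₂ hp₁s₁ hp₂s₁ hp₃s₁
    hp₁s₂ hp₂s₂ hp₃s₂ with h | h
  exacts [h₁₃ h.symm, h₂₃ h.symm]

/-- For non-real `v`, the circle with this center through `J` is the locus of the points `P` such
that `Z` lies on the line through `P` with direction `v * (P - J)`. -/
noncomputable def spiralCircleCenter (v J Z : ℂ) : ℂ := (v * J - conj v * Z) / (v - conj v)

theorem dist_spiralCircleCenter_eq {v J P Z : ℂ} (hv : v.im ≠ 0) {t : ℝ}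
    (h : Z - P = t * (v * (P - J))) :
    dist P (spiralCircleCenter v J Z) = dist J (spiralCircleCenter v J Z) := by
  obtain rfl : Z = P + t * (v * (P - J)) := eq_add_of_sub_eq' h
  have hD : v - conj v ≠ 0 := by rw [sub_conj]; simpa [Complex.ext_iff] using hv
  set s : ℂ := v + t * (v * conj v)
  have hP : P - spiralCircleCenter v J (P + t * (v * (P - J))) = (P - J) * s / (v - conj v) := by
    rw [spiralCircleCenter]; field_simp; ring
  have hJ : J - spiralCircleCenter v J (P + t * (v * (P - J))) =
      (P - J) * conj s / (v - conj v) := by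
    rw [spiralCircleCenter]; field_simp
    simp only [s, map_add, map_mul, conj_ofReal, conj_conj]
    ring
  rw [dist_eq, dist_eq, hP, hJ, norm_div, norm_div, norm_mul, norm_mul, norm_conj]

theorem dist_spiralCircleCenter_of_collinear {w J P Z : ℂ} (hw : w.im ≠ 0)
    (h : Collinear ℝ ({P, J + w * (P - J), Z} : Set ℂ)) :
    dist P (spiralCircleCenter (w - 1) J Z) = dist J (spiralCircleCenter (w - 1) J Z) := by
  have hv : (w - 1).im ≠ 0 := by simpa using hw
  rcases eq_or_ne P J with rfl | hPJ
  · rfl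
  have hPP' : P ≠ J + w * (P - J) := by
    intro hP
    have : (w - 1) * (P - J) = 0 := by linear_combination -hP
    exact mul_ne_zero (fun h ↦ hv (by simp [h])) (sub_ne_zero.mpr hPJ) this
  have hZ := h.mem_affineSpan_of_mem_of_ne (p₃ := Z) (by simp) (by simp) (by simp) hPP'
  rw [← vsub_vadd Z P, vadd_left_mem_affineSpan_pair] at hZ
  obtain ⟨t, ht⟩ := hZ
  refine dist_spiralCircleCenter_eq hv (t := t) ?_
  rw [← vsub_eq_sub, ← ht, real_smul, vsub_eq_sub]
  ring

theorem mem_sphere_of_collinear_spiral {w J A B C Z : ℂ} {s : Sphere ℂ} (hw : w.im ≠ 0)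
    (hAB : A ≠ B) (hAC : A ≠ C) (hBC : B ≠ C)
    (hA : Collinear ℝ ({A, J + w * (A - J), Z} : Set ℂ))
    (hB : Collinear ℝ ({B, J + w * (B - J), Z} : Set ℂ))
    (hC : Collinear ℝ ({C, J + w * (C - J), Z} : Set ℂ))
    (hAs : A ∈ s) (hBs : B ∈ s) (hCs : C ∈ s) : Z ∈ s := by
  let K := spiralCircleCenter (w - 1) J Z
  have hZ : dist Z K = dist J K := dist_spiralCircleCenter_eq (t := 0) (by simpa using hw) (by simp)
  have hs : (⟨K, dist J K⟩ : Sphere ℂ) = s :=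
    Sphere.eq_of_mem_of_mem_of_mem finrank_real_complex hAB hAC hBC
      (dist_spiralCircleCenter_of_collinear hw hA) (dist_spiralCircleCenter_of_collinear hw hB)
      (dist_spiralCircleCenter_of_collinear hw hC) hAs hBs hCs
  exact hs ▸ hZ

theorem spiral_ne_spiral {w J P Q : ℂ} (hw : w ≠ 0) (h : P ≠ Q) :
    J + w * (P - J) ≠ J + w * (Q - J) := by
  simpa [hw] using h

theorem collinear_inv_spiral {w J P Z : ℂ} (hw : w ≠ 0)
    (h : Collinear ℝ ({P, J + w * (P - J), Z} : Set ℂ)) :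
    Collinear ℝ ({J + w * (P - J), J + w⁻¹ * (J + w * (P - J) - J), Z} : Set ℂ) := by
  have hP : J + w⁻¹ * (J + w * (P - J) - J) = P := by field_simp; ring
  rwa [hP, Set.insert_comm]

theorem stmt_12_general (J A B C A' B' C' O₁ O₂ : ℂ) (r₁ r₂ : ℝ) (w : ℂ)
    (hwim : w.im ≠ 0)
    (hncol : ¬ Collinear ℝ ({A, B, C} : Set ℂ))
    (hA' : A' = J + w * (A - J)) (hB' : B' = J + w * (B - J)) (hC' : C' = J + w * (C - J))
    (hO₁ : dist O₁ A = r₁ ∧ dist O₁ B = r₁ ∧ dist O₁ C = r₁)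
    (hO₂ : dist O₂ A' = r₂ ∧ dist O₂ B' = r₂ ∧ dist O₂ C' = r₂) :
    (∃ Z : ℂ, Collinear ℝ ({A, A', Z} : Set ℂ) ∧ Collinear ℝ ({B, B', Z} : Set ℂ) ∧
        Collinear ℝ ({C, C', Z} : Set ℂ)) ↔
    (∃ Z : ℂ, Collinear ℝ ({A, A', Z} : Set ℂ) ∧ Collinear ℝ ({B, B', Z} : Set ℂ) ∧
        Collinear ℝ ({C, C', Z} : Set ℂ) ∧ dist O₁ Z = r₁ ∧ dist O₂ Z = r₂) := by
  refine ⟨fun ⟨Z, hA, hB, hC⟩ ↦ ⟨Z, hA, hB, hC, ?_, ?_⟩, fun ⟨Z, hA, hB, hC, _⟩ ↦ ⟨Z, hA, hB, hC⟩⟩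
  all_goals subst hA' hB' hC'
  · exact mem_sphere'.mp <| mem_sphere_of_collinear_spiral (s := ⟨O₁, r₁⟩) hwim
      (ne₁₂_of_not_collinear hncol) (ne₁₃_of_not_collinear hncol) (ne₂₃_of_not_collinear hncol)
      hA hB hC (mem_sphere'.mpr hO₁.1) (mem_sphere'.mpr hO₁.2.1) (mem_sphere'.mpr hO₁.2.2)
  · have hw0 : w ≠ 0 := fun h ↦ hwim (by simp [h])
    have hwinv : w⁻¹.im ≠ 0 := by simpa [hw0] using hwim
    exact mem_sphere'.mp <| mem_sphere_of_collinear_spiral (s := ⟨O₂, r₂⟩) hwinv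
      (spiral_ne_spiral hw0 (ne₁₂_of_not_collinear hncol))
      (spiral_ne_spiral hw0 (ne₁₃_of_not_collinear hncol))
      (spiral_ne_spiral hw0 (ne₂₃_of_not_collinear hncol))
      (collinear_inv_spiral hw0 hA) (collinear_inv_spiral hw0 hB) (collinear_inv_spiral hw0 hC)
      (mem_sphere'.mpr hO₂.1) (mem_sphere'.mpr hO₂.2.1) (mem_sphere'.mpr hO₂.2.2)

/-- Let triangles `ABC` and `A'B'C'` be related by a nontrivial spiral similarity centred
at `J` with non-real ratio `w`.  Then the lines `AA', BB', CC'` are concurrent if and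
only if they are concurrent at a point lying on both circumcircles (the second
intersection point of the circumcircles of `ABC` and `A'B'C'`). -/
theorem stmt_12 (J A B C A' B' C' O₁ O₂ : ℂ) (r₁ r₂ : ℝ) (w : ℂ)
    (hw0 : w ≠ 0) (hw1 : w ≠ 1) (hwim : w.im ≠ 0)
    (hncol : ¬ Collinear ℝ ({A, B, C} : Set ℂ))
    (hAJ : A ≠ J) (hBJ : B ≠ J) (hCJ : C ≠ J)
    (hA' : A' = J + w * (A - J)) (hB' : B' = J + w * (B - J)) (hC' : C' = J + w * (C - J))
    (hO₁ : dist O₁ A = r₁ ∧ dist O₁ B = r₁ ∧ dist O₁ C = r₁)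
    (hO₂ : dist O₂ A' = r₂ ∧ dist O₂ B' = r₂ ∧ dist O₂ C' = r₂) :
    (∃ Z : ℂ, Collinear ℝ ({A, A', Z} : Set ℂ) ∧ Collinear ℝ ({B, B', Z} : Set ℂ) ∧
        Collinear ℝ ({C, C', Z} : Set ℂ)) ↔
    (∃ Z : ℂ, Collinear ℝ ({A, A', Z} : Set ℂ) ∧ Collinear ℝ ({B, B', Z} : Set ℂ) ∧
        Collinear ℝ ({C, C', Z} : Set ℂ) ∧ dist O₁ Z = r₁ ∧ dist O₂ Z = r₂) :=
  stmt_12_general J A B C A' B' C' O₁ O₂ r₁ r₂ w hwim hncol hA' hB' hC' hO₁ hO₂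
end

section
/- Let a spiral similarity centered at J map triangle ABC to triangle abc. For each vertex pair, let L, M, N be the intersections of the perpendicular bisectors of (JA, Ja), (JB, Jb), (JC, Jc) respectively. Then the same spiral-similarity structure holds: triangle LMN is directly similar to triangle ABC, and the similarity taking ABC to LMN is also centered at J. -/
/-!
Division by `A` is a spiral similarity about `J = 0`, so `L / A` is equidistant from
`0 = 0 / A`, `1 = A / A` and `w = wA / A`; likewise `M / B` and `N / C`. Since `w` is not
real, `0, 1, w` are not collinear and have only one circumcentre, so the three quotients
coincide.
-/

open Complex

lemma dist_div_div {𝕜 : Type*} [NormedDivisionRing 𝕜] (a b X : 𝕜) :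
    dist (a / X) (b / X) = dist a b / ‖X‖ := by
  rw [dist_eq_norm, dist_eq_norm, ← sub_div, norm_div]

lemma dist_div_eq_dist_div {𝕜 : Type*} [NormedDivisionRing 𝕜] {z p q : 𝕜}
    (h : dist z p = dist z q) (X : 𝕜) : dist (z / X) (p / X) = dist (z / X) (q / X) := by
  rw [dist_div_div, dist_div_div, h]

namespace Complex

lemma re_mul_add_im_mul_eq_of_dist_zero_eq {z p : ℂ} (h : dist z 0 = dist z p) :
    z.re * p.re + z.im * p.im = normSq p / 2 := by
  have hsq := congrArg (· ^ 2) h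
  simp only [dist_eq, sub_zero, Complex.sq_norm, normSq_apply, sub_re, sub_im] at hsq
  rw [normSq_apply]
  linarith

lemma eq_of_dist_zero_eq_dist_one_eq_dist {w u v : ℂ} (hw : w.im ≠ 0)
    (hu₁ : dist u 0 = dist u 1) (huw : dist u 0 = dist u w)
    (hv₁ : dist v 0 = dist v 1) (hvw : dist v 0 = dist v w) : u = v := by
  have hu_re := re_mul_add_im_mul_eq_of_dist_zero_eq hu₁
  have hv_re := re_mul_add_im_mul_eq_of_dist_zero_eq hv₁
  simp only [one_re, one_im, normSq_one, mul_one, mul_zero, add_zero] at hu_re hv_re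
  have hu_w := re_mul_add_im_mul_eq_of_dist_zero_eq huw
  have hv_w := re_mul_add_im_mul_eq_of_dist_zero_eq hvw
  have him : (u.im - v.im) * w.im = 0 := by
    linear_combination hu_w - hv_w - w.re * (hu_re - hv_re)
  refine Complex.ext (by linarith) ?_
  linarith [(mul_eq_zero.mp him).resolve_right hw]

lemma dist_div_zero_eq_dist_div_one_and_dist_div {z X : ℂ} (w : ℂ) (hX : X ≠ 0)
    (h : dist z 0 = dist z X ∧ dist z 0 = dist z (w * X)) :
    dist (z / X) 0 = dist (z / X) 1 ∧ dist (z / X) 0 = dist (z / X) w := by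
  have h₀ : (0 : ℂ) / X = 0 := zero_div X
  have h₁ : X / X = 1 := div_self hX
  have h_w : w * X / X = w := mul_div_cancel_right₀ w hX
  constructor
  · simpa only [h₀, h₁] using dist_div_eq_dist_div h.1 X
  · simpa only [h₀, h_w] using dist_div_eq_dist_div h.2 X

end Complex

theorem stmt_17_general (A B C : ℂ) (w : ℂ)
    (hwim : w.im ≠ 0)
    (hA0 : A ≠ 0) (hB0 : B ≠ 0) (hC0 : C ≠ 0)
    (L M N : ℂ)
    (hL : dist L 0 = dist L A ∧ dist L 0 = dist L (w * A))
    (hM : dist M 0 = dist M B ∧ dist M 0 = dist M (w * B))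
    (hN : dist N 0 = dist N C ∧ dist N 0 = dist N (w * C)) :
    ∃ u : ℂ, u ≠ 0 ∧ L = u * A ∧ M = u * B ∧ N = u * C := by
  obtain ⟨hL₁, hL_w⟩ := dist_div_zero_eq_dist_div_one_and_dist_div w hA0 hL
  obtain ⟨hM₁, hM_w⟩ := dist_div_zero_eq_dist_div_one_and_dist_div w hB0 hM
  obtain ⟨hN₁, hN_w⟩ := dist_div_zero_eq_dist_div_one_and_dist_div w hC0 hN
  have hML : M / B = L / A := eq_of_dist_zero_eq_dist_one_eq_dist hwim hM₁ hM_w hL₁ hL_w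
  have hNL : N / C = L / A := eq_of_dist_zero_eq_dist_one_eq_dist hwim hN₁ hN_w hL₁ hL_w
  refine ⟨L / A, ?_, (div_mul_cancel₀ L hA0).symm, ?_, ?_⟩
  · intro hu
    rw [hu] at hL₁
    norm_num at hL₁
  · rw [← hML, div_mul_cancel₀ M hB0]
  · rw [← hNL, div_mul_cancel₀ N hC0]

/-- With `J` at the origin, let the spiral similarity `z ↦ w z` (`w` non-real, `w ≠ 0`)
map `A, B, C` to `a = wA, b = wB, c = wC`, and let `L, M, N` be the circumcentres of
triangles `JAa, JBb, JCc` (the points equidistant from the triple).  Then `L = uA`,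
`M = uB`, `N = uC` for a common complex number `u`: triangle `LMN` is directly similar to
`ABC` via a spiral similarity also centred at `J`. -/
theorem stmt_17 (A B C : ℂ) (w : ℂ)
    (hw0 : w ≠ 0) (hwim : w.im ≠ 0)
    (hA0 : A ≠ 0) (hB0 : B ≠ 0) (hC0 : C ≠ 0)
    (L M N : ℂ)
    (hL : dist L 0 = dist L A ∧ dist L 0 = dist L (w * A))
    (hM : dist M 0 = dist M B ∧ dist M 0 = dist M (w * B))
    (hN : dist N 0 = dist N C ∧ dist N 0 = dist N (w * C)) :
    ∃ u : ℂ, u ≠ 0 ∧ L = u * A ∧ M = u * B ∧ N = u * C :=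
  stmt_17_general A B C w hwim hA0 hB0 hC0 L M N hL hM hN
end

section
/- Let two triangles PQR and P'Q'R' be directly similar via a spiral similarity centered at J, and suppose they are in perspective from a point S. Then the circumcircles of PQR and P'Q'R' both pass through S, and the second intersection of the two circumcircles is J. -/
open Complex

private lemma colin_ratio (X Y Z : ℂ) (hXY : Y ≠ X) (h : Collinear ℝ ({X, Y, Z} : Set ℂ)) :
    ∃ l : ℝ, Z - X = (l : ℂ) * (Y - X) := by
  rw [collinear_iff_of_mem (show X ∈ ({X, Y, Z} : Set ℂ) by simp)] at h
  obtain ⟨v, hv⟩ := h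
  obtain ⟨rY, hrY⟩ := hv Y (by simp)
  obtain ⟨rZ, hrZ⟩ := hv Z (by simp)
  have hY : Y - X = (rY : ℂ) * v := by rw [hrY]; simp [Complex.real_smul]
  have hZ : Z - X = (rZ : ℂ) * v := by rw [hrZ]; simp [Complex.real_smul]
  have hrY0 : (rY : ℂ) ≠ 0 := by
    intro h0
    rw [h0, zero_mul, sub_eq_zero] at hY
    exact hXY hY
  refine ⟨rZ / rY, ?_⟩
  rw [hY, hZ]
  push_cast
  field_simp

private lemma ortho_zero (P Q R d : ℂ) (h : ¬ Collinear ℝ ({P, Q, R} : Set ℂ))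
    (h1 : ((starRingEnd ℂ) d * (Q - P)).re = 0) (h2 : ((starRingEnd ℂ) d * (R - P)).re = 0) :
    d = 0 := by
  by_contra hd
  apply h
  rw [collinear_iff_of_mem (show P ∈ ({P, Q, R} : Set ℂ) by simp)]
  refine ⟨Complex.I * d, ?_⟩
  have hnd : d.re * d.re + d.im * d.im ≠ 0 := by
    have := (Complex.normSq_pos.mpr hd)
    simp only [Complex.normSq_apply] at this
    positivity
  have key : ∀ z : ℂ, ((starRingEnd ℂ) d * z).re = 0 → ∃ r : ℝ, z = r • (Complex.I * d) := by
    intro z hz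
    simp only [Complex.mul_re, Complex.conj_re, Complex.conj_im] at hz
    refine ⟨(d.re * z.im - d.im * z.re) / (d.re * d.re + d.im * d.im), ?_⟩
    apply Complex.ext
    · simp only [Complex.real_smul, Complex.mul_re, Complex.ofReal_re,
        Complex.ofReal_im, Complex.I_re, Complex.I_im]
      have hnd2 : d.re ^ 2 + d.im ^ 2 ≠ 0 := by rw [sq, sq]; exact hnd
      field_simp
      linear_combination d.re * hz
    · simp only [Complex.real_smul, Complex.mul_im, Complex.ofReal_re,
        Complex.ofReal_im, Complex.I_re, Complex.I_im]
      have hnd2 : d.re ^ 2 + d.im ^ 2 ≠ 0 := by rw [sq, sq]; exact hnd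
      field_simp
      linear_combination d.im * hz
  intro p hp
  rcases hp with rfl | rfl | rfl
  · exact ⟨0, by simp⟩
  · obtain ⟨r, hr⟩ := key (p - P) h1
    exact ⟨r, by rw [← hr]; simp⟩
  · obtain ⟨r, hr⟩ := key (p - P) h2
    exact ⟨r, by rw [← hr]; simp⟩

private lemma circle_mem (τ : ℝ) (hτ : τ ≠ 0) (μ z : ℂ)
    (h : (μ * (starRingEnd ℂ) z).im = τ * Complex.normSq z) :
    ‖(τ⁻¹/2 : ℝ) • (-(Complex.I) * μ) - z‖
      = ‖(τ⁻¹/2 : ℝ) • (-(Complex.I) * μ)‖ := by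
  rw [Complex.norm_def, Complex.norm_def]
  congr 1
  simp only [Complex.normSq_apply, Complex.mul_im, Complex.conj_re, Complex.conj_im] at h
  simp only [Complex.normSq_apply, Complex.sub_re, Complex.sub_im, Complex.real_smul,
    Complex.mul_re, Complex.mul_im, Complex.ofReal_re, Complex.ofReal_im, Complex.neg_re,
    Complex.neg_im, Complex.I_re, Complex.I_im]
  field_simp
  linear_combination (-4*τ) * h

private lemma perp_of_two_circles (X Y A B : ℂ) (r ρ : ℝ)
    (h1 : ‖X - A‖ = r) (h2 : ‖X - B‖ = r)
    (h3 : ‖Y - A‖ = ρ) (h4 : ‖Y - B‖ = ρ) :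
    ((starRingEnd ℂ) (X - Y) * (B - A)).re = 0 := by
  have e1 : Complex.normSq (X - A) = Complex.normSq (X - B) := by
    rw [← Complex.sq_norm, ← Complex.sq_norm, h1, h2]
  have e2 : Complex.normSq (Y - A) = Complex.normSq (Y - B) := by
    rw [← Complex.sq_norm, ← Complex.sq_norm, h3, h4]
  simp only [Complex.normSq_apply, Complex.sub_re, Complex.sub_im] at e1 e2
  simp only [Complex.mul_re, Complex.conj_re, Complex.conj_im, Complex.sub_re, Complex.sub_im]
  linear_combination (1/2) * e1 - (1/2) * e2

/-- Let triangles `PQR` and `P'Q'R'` be related by a spiral similarity centred at `J`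
with non-real ratio `w` (`w ≠ 0, 1`), and suppose they are in perspective from `S` (the
lines `PP', QQ', RR'` all pass through `S`).  Then the circumcircles of `PQR` and
`P'Q'R'` both pass through `S`, and their second intersection point is `J`: `J` lies on
both circumcircles as well. -/
theorem stmt_19 (J P Q R P' Q' R' S O₁ O₂ : ℂ) (r₁ r₂ : ℝ) (w : ℂ)
    (hw0 : w ≠ 0) (hw1 : w ≠ 1) (hwim : w.im ≠ 0)
    (hncol : ¬ Collinear ℝ ({P, Q, R} : Set ℂ))
    (hPJ : P ≠ J) (hQJ : Q ≠ J) (hRJ : R ≠ J)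
    (hP' : P' = J + w * (P - J)) (hQ' : Q' = J + w * (Q - J)) (hR' : R' = J + w * (R - J))
    (hO₁ : dist O₁ P = r₁ ∧ dist O₁ Q = r₁ ∧ dist O₁ R = r₁)
    (hO₂ : dist O₂ P' = r₂ ∧ dist O₂ Q' = r₂ ∧ dist O₂ R' = r₂)
    (hSP : Collinear ℝ ({P, P', S} : Set ℂ))
    (hSQ : Collinear ℝ ({Q, Q', S} : Set ℂ))
    (hSR : Collinear ℝ ({R, R', S} : Set ℂ)) :
    dist O₁ S = r₁ ∧ dist O₂ S = r₂ ∧ dist O₁ J = r₁ ∧ dist O₂ J = r₂ := by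
  obtain ⟨h1P, h1Q, h1R⟩ := hO₁
  obtain ⟨h2P, h2Q, h2R⟩ := hO₂
  have htne : w - 1 ≠ 0 := sub_ne_zero.mpr hw1
  have hτ : (-w.im : ℝ) ≠ 0 := neg_ne_zero.mpr hwim
  -- ratios from collinearity
  have hP'P : P' ≠ P := by
    rw [hP']; intro h
    exact (mul_ne_zero htne (sub_ne_zero.mpr hPJ)) (by linear_combination h)
  have hQ'Q : Q' ≠ Q := by
    rw [hQ']; intro h
    exact (mul_ne_zero htne (sub_ne_zero.mpr hQJ)) (by linear_combination h)
  have hR'R : R' ≠ R := by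
    rw [hR']; intro h
    exact (mul_ne_zero htne (sub_ne_zero.mpr hRJ)) (by linear_combination h)
  obtain ⟨lP, hlP⟩ := colin_ratio P P' S hP'P hSP
  obtain ⟨lQ, hlQ⟩ := colin_ratio Q Q' S hQ'Q hSQ
  obtain ⟨lR, hlR⟩ := colin_ratio R R' S hR'R hSR
  rw [hP'] at hlP
  rw [hQ'] at hlQ
  rw [hR'] at hlR
  have hsa : S - J = (P - J) + (lP : ℂ) * ((w-1)*(P-J)) := by linear_combination hlP
  have hsb : S - J = (Q - J) + (lQ : ℂ) * ((w-1)*(Q-J)) := by linear_combination hlQ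
  have hsc : S - J = (R - J) + (lR : ℂ) * ((w-1)*(R-J)) := by linear_combination hlR
  -- circle 1 data
  set μ₁ : ℂ := (S - J) * (starRingEnd ℂ) (w - 1) with hμ₁
  set c₁ : ℂ := ((-w.im : ℝ)⁻¹/2 : ℝ) • (-(Complex.I) * μ₁) with hc₁
  have memc1 : ∀ z : ℂ, (μ₁ * (starRingEnd ℂ) z).im = (-w.im) * Complex.normSq z →
      ‖c₁ - z‖ = ‖c₁‖ := fun z h => circle_mem (-w.im) hτ μ₁ z h
  have m1P : ‖c₁ - (P - J)‖ = ‖c₁‖ := by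
    apply memc1
    rw [hμ₁, hsa]
    simp only [Complex.mul_im, Complex.mul_re, Complex.add_re, Complex.add_im, Complex.sub_re,
      Complex.sub_im, Complex.conj_re, Complex.conj_im, Complex.ofReal_re, Complex.ofReal_im,
      Complex.one_re, Complex.one_im, Complex.normSq_apply]
    ring
  have m1Q : ‖c₁ - (Q - J)‖ = ‖c₁‖ := by
    apply memc1
    rw [hμ₁, hsb]
    simp only [Complex.mul_im, Complex.mul_re, Complex.add_re, Complex.add_im, Complex.sub_re,
      Complex.sub_im, Complex.conj_re, Complex.conj_im, Complex.ofReal_re, Complex.ofReal_im,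
      Complex.one_re, Complex.one_im, Complex.normSq_apply]
    ring
  have m1R : ‖c₁ - (R - J)‖ = ‖c₁‖ := by
    apply memc1
    rw [hμ₁, hsc]
    simp only [Complex.mul_im, Complex.mul_re, Complex.add_re, Complex.add_im, Complex.sub_re,
      Complex.sub_im, Complex.conj_re, Complex.conj_im, Complex.ofReal_re, Complex.ofReal_im,
      Complex.one_re, Complex.one_im, Complex.normSq_apply]
    ring
  have m1S : ‖c₁ - (S - J)‖ = ‖c₁‖ := by
    apply memc1
    rw [hμ₁]
    simp only [Complex.mul_im, Complex.mul_re, Complex.sub_re, Complex.sub_im, Complex.conj_re,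
      Complex.conj_im, Complex.one_re, Complex.one_im, Complex.normSq_apply]
    ring
  -- circle 2 data
  set μ₂ : ℂ := (S - J) * (starRingEnd ℂ) (w - 1) * w with hμ₂
  set c₂ : ℂ := ((-w.im : ℝ)⁻¹/2 : ℝ) • (-(Complex.I) * μ₂) with hc₂
  have memc2 : ∀ z : ℂ, (μ₂ * (starRingEnd ℂ) z).im = (-w.im) * Complex.normSq z →
      ‖c₂ - z‖ = ‖c₂‖ := fun z h => circle_mem (-w.im) hτ μ₂ z h
  have m2P : ‖c₂ - (w * (P - J))‖ = ‖c₂‖ := by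
    apply memc2
    rw [hμ₂, hsa]
    simp only [Complex.mul_im, Complex.mul_re, Complex.add_re, Complex.add_im, Complex.sub_re,
      Complex.sub_im, Complex.conj_re, Complex.conj_im, Complex.ofReal_re, Complex.ofReal_im,
      Complex.one_re, Complex.one_im, Complex.normSq_apply]
    ring
  have m2Q : ‖c₂ - (w * (Q - J))‖ = ‖c₂‖ := by
    apply memc2
    rw [hμ₂, hsb]
    simp only [Complex.mul_im, Complex.mul_re, Complex.add_re, Complex.add_im, Complex.sub_re,
      Complex.sub_im, Complex.conj_re, Complex.conj_im, Complex.ofReal_re, Complex.ofReal_im,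
      Complex.one_re, Complex.one_im, Complex.normSq_apply]
    ring
  have m2R : ‖c₂ - (w * (R - J))‖ = ‖c₂‖ := by
    apply memc2
    rw [hμ₂, hsc]
    simp only [Complex.mul_im, Complex.mul_re, Complex.add_re, Complex.add_im, Complex.sub_re,
      Complex.sub_im, Complex.conj_re, Complex.conj_im, Complex.ofReal_re, Complex.ofReal_im,
      Complex.one_re, Complex.one_im, Complex.normSq_apply]
    ring
  have m2S : ‖c₂ - (S - J)‖ = ‖c₂‖ := by
    apply memc2
    rw [hμ₂]
    simp only [Complex.mul_im, Complex.mul_re, Complex.sub_re, Complex.sub_im, Complex.conj_re,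
      Complex.conj_im, Complex.one_re, Complex.one_im, Complex.normSq_apply]
    ring
  -- rewrite dist hypotheses as abs
  rw [Complex.dist_eq] at h1P h1Q h1R h2P h2Q h2R
  -- uniqueness for circle 1
  have a1P : ‖(J + c₁) - P‖ = ‖c₁‖ := by
    rw [show (J + c₁) - P = c₁ - (P - J) by ring]; exact m1P
  have a1Q : ‖(J + c₁) - Q‖ = ‖c₁‖ := by
    rw [show (J + c₁) - Q = c₁ - (Q - J) by ring]; exact m1Q
  have a1R : ‖(J + c₁) - R‖ = ‖c₁‖ := by
    rw [show (J + c₁) - R = c₁ - (R - J) by ring]; exact m1R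
  have hd1 : O₁ - (J + c₁) = 0 := by
    apply ortho_zero P Q R _ hncol
    · exact perp_of_two_circles O₁ (J + c₁) P Q r₁ (‖c₁‖) h1P h1Q a1P a1Q
    · exact perp_of_two_circles O₁ (J + c₁) P R r₁ (‖c₁‖) h1P h1R a1P a1R
  have hO₁eq : O₁ = J + c₁ := by linear_combination hd1
  -- uniqueness for circle 2
  have a2P : ‖(J + c₂) - P'‖ = ‖c₂‖ := by
    rw [hP', show (J + c₂) - (J + w * (P - J)) = c₂ - (w * (P - J)) by ring]; exact m2P
  have a2Q : ‖(J + c₂) - Q'‖ = ‖c₂‖ := by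
    rw [hQ', show (J + c₂) - (J + w * (Q - J)) = c₂ - (w * (Q - J)) by ring]; exact m2Q
  have a2R : ‖(J + c₂) - R'‖ = ‖c₂‖ := by
    rw [hR', show (J + c₂) - (J + w * (R - J)) = c₂ - (w * (R - J)) by ring]; exact m2R
  have hd2 : O₂ - (J + c₂) = 0 := by
    have p1 := perp_of_two_circles O₂ (J + c₂) P' Q' r₂ (‖c₂‖) h2P h2Q a2P a2Q
    have p2 := perp_of_two_circles O₂ (J + c₂) P' R' r₂ (‖c₂‖) h2P h2R a2P a2R
    have hw' : (starRingEnd ℂ) w * (O₂ - (J + c₂)) = 0 := by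
      apply ortho_zero P Q R _ hncol
      · have : (starRingEnd ℂ) ((starRingEnd ℂ) w * (O₂ - (J + c₂))) * (Q - P)
            = (starRingEnd ℂ) (O₂ - (J + c₂)) * (Q' - P') := by
          rw [hP', hQ']
          simp only [map_mul, Complex.conj_conj]
          ring
        rw [this]; exact p1
      · have : (starRingEnd ℂ) ((starRingEnd ℂ) w * (O₂ - (J + c₂))) * (R - P)
            = (starRingEnd ℂ) (O₂ - (J + c₂)) * (R' - P') := by
          rw [hP', hR']
          simp only [map_mul, Complex.conj_conj]
          ring
        rw [this]; exact p2
    have hcw : (starRingEnd ℂ) w ≠ 0 := by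
      simpa using hw0
    exact (mul_eq_zero.mp hw').resolve_left hcw
  have hO₂eq : O₂ = J + c₂ := by linear_combination hd2
  -- radii
  have hr₁ : r₁ = ‖c₁‖ := by rw [← h1P, hO₁eq, a1P]
  have hr₂ : r₂ = ‖c₂‖ := by rw [← h2P, hO₂eq, a2P]
  refine ⟨?_, ?_, ?_, ?_⟩
  · rw [Complex.dist_eq, hO₁eq, hr₁, show (J + c₁) - S = c₁ - (S - J) by ring]; exact m1S
  · rw [Complex.dist_eq, hO₂eq, hr₂, show (J + c₂) - S = c₂ - (S - J) by ring]; exact m2S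
  · rw [Complex.dist_eq, hO₁eq, hr₁]; simp
  · rw [Complex.dist_eq, hO₂eq, hr₂]; simp
end
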